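/- arXiv:2604.04146 — 3 statements merged into one kernel-verified Lean document; each statement's English description precedes it below -/
import Mathlib

section
/- (Vertex-Splitting Lemma.) Let R be a commutative ring and let G be a finite simple graph with edge weights w in R. Let v be a vertex of G and let the neighbor set N(v) of v be partitioned into two disjoint (possibly empty) sets H and K. Let G' be the weighted graph on the vertex set (V(G) ∖ {v}) ∪ {v', v'', u}, where v', v'', u are three new vertices, whose edges are: all edges of G not incident to v, with their weights unchanged; an edge {v', x} of weight w({v,x}) for each x ∈ H; an edge {v'', y} of weight w({v,y}) for each y ∈ K; and two edges {u, v'} and {u, v''} of weight 1. Then M(G, w) = M(G', w'). -/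
open scoped Classical

/-- The matching generating function of the graph `G` restricted to the vertex
set `V`, with edge weights `w`. -/
noncomputable def MGF {α R : Type*} [CommRing R] (V : Finset α) (G : SimpleGraph α)
    (w : Sym2 α → R) : R :=
  ∑ N ∈ ((V ×ˢ V).image fun p => Sym2.mk p.1 p.2).powerset.filter
      (fun N => (∀ e ∈ N, e ∈ G.edgeSet) ∧ ∀ v ∈ V, ∃! e, e ∈ N ∧ v ∈ e),
    ∏ e ∈ N, w e

/-- The relation describing the vertex-split graph `G'`: on the vertex set
`(V(G) ∖ {v}) ⊕ Fin 3`, where `Sum.inr 0 = v'`, `Sum.inr 1 = v''`,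
`Sum.inr 2 = u`.  Edges: the edges of `G` not incident to `v`; `v'` joined to
every vertex of `H`; `v''` joined to every vertex of `K`; and `u` joined to
`v'` and `v''`. -/
def splitRel {α : Type*} (G : SimpleGraph α) (v : α) (H K : Set α) :
    ({x : α // x ≠ v} ⊕ Fin 3) → ({x : α // x ≠ v} ⊕ Fin 3) → Prop
  | Sum.inl x, Sum.inl y => G.Adj x.1 y.1
  | Sum.inl x, Sum.inr k => (k = 0 ∧ x.1 ∈ H) ∨ (k = 1 ∧ x.1 ∈ K)
  | Sum.inr j, Sum.inr k => (j = 0 ∧ k = 2) ∨ (j = 1 ∧ k = 2)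
  | Sum.inr _, Sum.inl _ => False


def IsPM {γ : Type*} (G : SimpleGraph γ) (N : Finset (Sym2 γ)) : Prop :=
  (∀ e ∈ N, e ∈ G.edgeSet) ∧ ∀ a : γ, ∃! e, e ∈ N ∧ a ∈ e

lemma MGF_univ {R γ : Type*} [CommRing R] [Fintype γ] (G : SimpleGraph γ) (w : Sym2 γ → R) :
    MGF Finset.univ G w = ∑ N ∈ Finset.univ.filter (IsPM G), ∏ e ∈ N, w e := by
  unfold MGF IsPM
  have himg : ((Finset.univ ×ˢ Finset.univ).image fun p : γ × γ => Sym2.mk p.1 p.2)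
      = (Finset.univ : Finset (Sym2 γ)) := by
    ext z
    simp only [Finset.mem_image, Finset.mem_univ, iff_true]
    induction z using Sym2.ind with
    | _ a b => exact ⟨(a, b), by simp⟩
  rw [himg, Finset.powerset_univ]
  congr 1
  ext N
  simp


namespace VSplit

variable {α : Type*} (v : α)

abbrev Vtx (v : α) : Type _ := {x : α // x ≠ v} ⊕ Fin 3

noncomputable def fwd (y : α) : Vtx v := if h : y = v then Sum.inr 2 else Sum.inl ⟨y, h⟩

def bwd : Vtx v → α
  | Sum.inl x => x.1
  | Sum.inr _ => v

lemma fwd_ne {y : α} (h : y ≠ v) : fwd v y = Sum.inl ⟨y, h⟩ := dif_neg h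

lemma bwd_fwd (y : α) : bwd v (fwd v y) = y := by
  unfold fwd; split <;> simp_all [bwd]

lemma fwd_inj : Function.Injective (fwd v) :=
  Function.LeftInverse.injective (bwd_fwd v)

noncomputable def gset (H : Set α) (x : α) : Finset (Sym2 (Vtx v)) :=
  if x ∈ H then {s(fwd v x, Sum.inr 0), s(Sum.inr 1, Sum.inr 2)}
  else {s(fwd v x, Sum.inr 1), s(Sum.inr 0, Sum.inr 2)}

noncomputable def Phi (H : Set α) : Sym2 α → Finset (Sym2 (Vtx v)) :=
  Sym2.lift ⟨fun a b => if a = v then gset v H b else if b = v then gset v H a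
      else {s(fwd v a, fwd v b)},
    by
      intro a b
      by_cases ha : a = v <;> by_cases hb : b = v <;> simp [ha, hb, Sym2.eq_swap]⟩

noncomputable def phiM (H : Set α) (N : Finset (Sym2 α)) : Finset (Sym2 (Vtx v)) :=
  N.biUnion (Phi v H)

lemma mem_phiM {H : Set α} {N : Finset (Sym2 α)} {e' : Sym2 (Vtx v)} :
    e' ∈ phiM v H N ↔ ∃ e ∈ N, e' ∈ Phi v H e := by unfold phiM; exact Finset.mem_biUnion

lemma Phi_mk (H : Set α) (a b : α) : Phi v H (s(a, b)) =
    if a = v then gset v H b else if b = v then gset v H a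
    else {s(fwd v a, fwd v b)} := rfl

lemma Phi_mk_v (H : Set α) (x : α) : Phi v H (s(v, x)) = gset v H x := by
  simp [Phi_mk]

lemma Phi_of_not_mem (H : Set α) {e : Sym2 α} (he : v ∉ e) :
    Phi v H e = {Sym2.map (fwd v) e} := by
  induction e using Sym2.ind with
  | _ a b =>
    simp only [Sym2.mem_iff, not_or] at he
    simp [Phi_mk, Ne.symm he.1, Ne.symm he.2, he.1, he.2]

noncomputable def Psi : Sym2 (Vtx v) → Finset (Sym2 α) :=
  Sym2.lift ⟨fun a b => match a, b with
      | Sum.inr _, Sum.inr _ => (∅ : Finset (Sym2 α))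
      | a, b => {s(bwd v a, bwd v b)},
    by
      rintro (a | a) (b | b) <;> simp [Sym2.eq_swap]⟩

lemma Psi_ll (a b : {x : α // x ≠ v}) :
    Psi v (s(Sum.inl a, Sum.inl b)) = {s(a.1, b.1)} := rfl

lemma Psi_lr (a : {x : α // x ≠ v}) (k : Fin 3) :
    Psi v (s(Sum.inl a, Sum.inr k)) = {s(a.1, v)} := rfl

lemma Psi_rr (j k : Fin 3) : Psi v (s(Sum.inr j, Sum.inr k)) = ∅ := rfl

variable (G : SimpleGraph α) (H K : Set α)

lemma adj_ll (a b : {x : α // x ≠ v}) :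
    (SimpleGraph.fromRel (splitRel G v H K)).Adj (Sum.inl a) (Sum.inl b) ↔ G.Adj a.1 b.1 := by
  simp only [SimpleGraph.fromRel_adj, splitRel]
  constructor
  · rintro ⟨-, h | h⟩
    · exact h
    · exact h.symm
  · intro h
    exact ⟨by simp [Subtype.ext_iff, h.ne], Or.inl h⟩

lemma adj_lr (a : {x : α // x ≠ v}) (k : Fin 3) :
    (SimpleGraph.fromRel (splitRel G v H K)).Adj (Sum.inl a) (Sum.inr k) ↔
      (k = 0 ∧ a.1 ∈ H) ∨ (k = 1 ∧ a.1 ∈ K) := by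
  simp [SimpleGraph.fromRel_adj, splitRel]

lemma adj_rl (a : {x : α // x ≠ v}) (k : Fin 3) :
    (SimpleGraph.fromRel (splitRel G v H K)).Adj (Sum.inr k) (Sum.inl a) ↔
      (k = 0 ∧ a.1 ∈ H) ∨ (k = 1 ∧ a.1 ∈ K) := by
  rw [SimpleGraph.adj_comm]; exact adj_lr v G H K a k

lemma adj_rr (j k : Fin 3) :
    (SimpleGraph.fromRel (splitRel G v H K)).Adj (Sum.inr j) (Sum.inr k) ↔
      ((j = 0 ∧ k = 2) ∨ (j = 1 ∧ k = 2)) ∨ ((k = 0 ∧ j = 2) ∨ (k = 1 ∧ j = 2)) := by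
  simp only [SimpleGraph.fromRel_adj, splitRel]
  constructor
  · rintro ⟨-, h⟩; exact h
  · rintro h
    refine ⟨?_, h⟩
    rcases h with (⟨h1, h2⟩ | ⟨h1, h2⟩) | (⟨h1, h2⟩ | ⟨h1, h2⟩) <;> simp [h1, h2] <;> decide

end VSplit


section
variable {γ : Type*} {G : SimpleGraph γ} {N : Finset (Sym2 γ)}

lemma IsPM.uniq (hN : IsPM G N) {e f : Sym2 γ} {a : γ} (he : e ∈ N) (hf : f ∈ N)
    (hae : a ∈ e) (haf : a ∈ f) : e = f :=
  ExistsUnique.unique (hN.2 a) ⟨he, hae⟩ ⟨hf, haf⟩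

lemma IsPM.not_diag (hN : IsPM G N) {e : Sym2 γ} (he : e ∈ N) : ¬ e.IsDiag :=
  SimpleGraph.not_isDiag_of_mem_edgeSet G (hN.1 e he)

lemma IsPM.exists_partner (hN : IsPM G N) (v : γ) :
    ∃ x, G.Adj v x ∧ s(v, x) ∈ N ∧ ∀ e ∈ N, v ∈ e → e = s(v, x) := by
  obtain ⟨e0, ⟨he0, hv0⟩, huniq⟩ := hN.2 v
  refine ⟨Sym2.Mem.other hv0, ?_, ?_, ?_⟩
  · have := hN.1 e0 he0
    rw [← Sym2.other_spec hv0] at this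
    exact this
  · rw [Sym2.other_spec hv0]; exact he0
  · intro e he hve
    rw [Sym2.other_spec hv0]
    exact huniq e ⟨he, hve⟩

lemma exists_mk (e : Sym2 γ) : ∃ a b, e = s(a, b) := by
  induction e using Sym2.ind with
  | _ a b => exact ⟨a, b, rfl⟩

end

namespace VSplit
variable {α : Type*} (v : α) (G : SimpleGraph α) (H K : Set α)

lemma mem_gset {x : α} (hx : x ≠ v) {e' : Sym2 (Vtx v)} :
    e' ∈ gset v H x ↔
      (x ∈ H ∧ (e' = s(Sum.inl ⟨x, hx⟩, Sum.inr 0) ∨ e' = s(Sum.inr 1, Sum.inr 2)))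
    ∨ (x ∉ H ∧ (e' = s(Sum.inl ⟨x, hx⟩, Sum.inr 1) ∨ e' = s(Sum.inr 0, Sum.inr 2))) := by
  unfold gset
  split <;> rename_i hxH <;> simp [hxH, fwd_ne v hx]

lemma inl_mem_map {z : {x : α // x ≠ v}} {e : Sym2 α} :
    Sum.inl z ∈ Sym2.map (fwd v) e ↔ z.1 ∈ e := by
  rw [Sym2.mem_map]
  constructor
  · rintro ⟨a, ha, hfa⟩
    unfold fwd at hfa
    split at hfa
    · exact absurd hfa (by simp)
    · obtain rfl : z = ⟨a, _⟩ := by exact Sum.inl.inj hfa.symm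
      exact ha
  · intro hz
    exact ⟨z.1, hz, fwd_ne v z.2⟩

lemma inr_mem_map {k : Fin 3} {e : Sym2 α} :
    Sum.inr k ∈ Sym2.map (fwd v) e ↔ k = 2 ∧ v ∈ e := by
  rw [Sym2.mem_map]
  constructor
  · rintro ⟨a, ha, hfa⟩
    unfold fwd at hfa
    split at hfa
    · rename_i h; subst h; exact ⟨(Sum.inr.inj hfa).symm, ha⟩
    · exact absurd hfa (by simp)
  · rintro ⟨rfl, hv⟩
    exact ⟨v, hv, dif_pos rfl⟩

variable {G H K v}

/-- Decomposition of membership in `φ N` for a perfect matching `N` with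
`v`-partner `x`. -/
lemma mem_phi_elim {N : Finset (Sym2 α)} {x : α}
    (hx : ∀ e ∈ N, v ∈ e → e = s(v, x)) (hxN : s(v, x) ∈ N)
    {e' : Sym2 (Vtx v)} (he' : e' ∈ phiM v H N) :
    e' ∈ gset v H x ∨ ∃ e ∈ N, v ∉ e ∧ e' = Sym2.map (fwd v) e := by
  rw [mem_phiM] at he'
  obtain ⟨e, heN, he'⟩ := he'
  by_cases hev : v ∈ e
  · left
    obtain rfl := hx e heN hev
    rwa [Phi_mk_v] at he'
  · right
    rw [Phi_of_not_mem v _ hev, Finset.mem_singleton] at he'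
    exact ⟨e, heN, hev, he'⟩

lemma gset_mem_phi {N : Finset (Sym2 α)} {x : α} (hxN : s(v, x) ∈ N)
    {e' : Sym2 (Vtx v)} (he' : e' ∈ gset v H x) : e' ∈ phiM v H N := by
  rw [mem_phiM]
  exact ⟨_, hxN, by rwa [Phi_mk_v]⟩

lemma map_mem_phi {N : Finset (Sym2 α)} {e : Sym2 α} (heN : e ∈ N) (hev : v ∉ e) :
    Sym2.map (fwd v) e ∈ phiM v H N := by
  rw [mem_phiM]
  exact ⟨e, heN, by rw [Phi_of_not_mem v _ hev]; simp⟩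


lemma phi_pm (hunion : H ∪ K = G.neighborSet v) {N : Finset (Sym2 α)} (hN : IsPM G N) :
    IsPM (SimpleGraph.fromRel (splitRel G v H K)) (phiM v H N) := by
  obtain ⟨x, hadj, hxN, hx⟩ := hN.exists_partner v
  have hxv : x ≠ v := hadj.ne'
  have hxHK : x ∈ H ∪ K := by rw [hunion]; exact hadj
  constructor
  · -- all edges
    intro e' he'
    rcases mem_phi_elim hx hxN he' with hg | ⟨e, heN, hev, rfl⟩
    · rw [mem_gset v H hxv] at hg
      rcases hg with ⟨hxH, rfl | rfl⟩ | ⟨hxH, rfl | rfl⟩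
      · rw [SimpleGraph.mem_edgeSet, adj_lr]; exact Or.inl ⟨rfl, hxH⟩
      · rw [SimpleGraph.mem_edgeSet, adj_rr]; exact Or.inl (Or.inr ⟨rfl, rfl⟩)
      · rw [SimpleGraph.mem_edgeSet, adj_lr]
        exact Or.inr ⟨rfl, hxHK.resolve_left hxH⟩
      · rw [SimpleGraph.mem_edgeSet, adj_rr]; exact Or.inl (Or.inl ⟨rfl, rfl⟩)
    · obtain ⟨a, b, rfl⟩ := exists_mk e
      have hab : G.Adj a b := hN.1 _ heN
      simp only [Sym2.mem_iff, not_or] at hev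
      have ha : a ≠ v := fun h => hev.1 h.symm
      have hb : b ≠ v := fun h => hev.2 h.symm
      rw [Sym2.map_pair_eq, fwd_ne v ha, fwd_ne v hb, SimpleGraph.mem_edgeSet, adj_ll]
      exact hab
  · -- coverage
    intro b
    match b with
    | Sum.inl z =>
      obtain ⟨ez, ⟨hezN, hzez⟩, -⟩ := hN.2 z.1
      by_cases hvez : v ∈ ez
      · -- z is matched to v in N, i.e. z.1 = x
        obtain rfl := hx ez hezN hvez
        have hzx : z = ⟨x, hxv⟩ := by
          rcases Sym2.mem_iff.mp hzez with h | h
          · exact absurd h z.2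
          · exact Subtype.ext h
        by_cases hxH : x ∈ H
        · refine ⟨s(Sum.inl z, Sum.inr 0),
            ⟨gset_mem_phi hxN ((mem_gset v H hxv).mpr (Or.inl ⟨hxH, Or.inl (by rw [hzx])⟩)),
              by simp⟩, ?_⟩
          rintro e' ⟨he', hze'⟩
          rcases mem_phi_elim hx hxN he' with hg | ⟨e, heN, hev, rfl⟩
          · rw [mem_gset v H hxv] at hg
            rcases hg with ⟨-, rfl | rfl⟩ | ⟨h, -⟩
            · rw [hzx]
            · simp at hze'
            · exact absurd hxH h
          · rw [inl_mem_map] at hze'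
            have := hN.uniq heN hezN hze' hzez
            subst this
            exact absurd hvez hev
        · refine ⟨s(Sum.inl z, Sum.inr 1),
            ⟨gset_mem_phi hxN ((mem_gset v H hxv).mpr (Or.inr ⟨hxH, Or.inl (by rw [hzx])⟩)),
              by simp⟩, ?_⟩
          rintro e' ⟨he', hze'⟩
          rcases mem_phi_elim hx hxN he' with hg | ⟨e, heN, hev, rfl⟩
          · rw [mem_gset v H hxv] at hg
            rcases hg with ⟨h, -⟩ | ⟨-, rfl | rfl⟩
            · exact absurd h hxH
            · rw [hzx]
            · simp at hze'
          · rw [inl_mem_map] at hze'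
            have := hN.uniq heN hezN hze' hzez
            subst this
            exact absurd hvez hev
      · -- z is matched inside N ∖ {edge at v}
        refine ⟨Sym2.map (fwd v) ez, ⟨map_mem_phi hezN hvez, (inl_mem_map v).mpr hzez⟩, ?_⟩
        rintro e' ⟨he', hze'⟩
        rcases mem_phi_elim hx hxN he' with hg | ⟨e, heN, hev, rfl⟩
        · exfalso
          rw [mem_gset v H hxv] at hg
          rcases hg with ⟨-, rfl | rfl⟩ | ⟨-, rfl | rfl⟩
          · rcases Sym2.mem_iff.mp hze' with h | h
            · obtain rfl : z = ⟨x, hxv⟩ := Sum.inl.inj h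
              have : ez = s(v, x) := hN.uniq hezN hxN hzez (by simp)
              rw [this] at hvez; simp at hvez
            · simp at h
          · simp at hze'
          · rcases Sym2.mem_iff.mp hze' with h | h
            · obtain rfl : z = ⟨x, hxv⟩ := Sum.inl.inj h
              have : ez = s(v, x) := hN.uniq hezN hxN hzez (by simp)
              rw [this] at hvez; simp at hvez
            · simp at h
          · simp at hze'
        · rw [inl_mem_map] at hze'
          rw [hN.uniq heN hezN hze' hzez]
    | Sum.inr k =>
      have hk3 : k = 0 ∨ k = 1 ∨ k = 2 := by omega
      by_cases hxH : x ∈ H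
      · have hgmem : ∀ e' ∈ ({s(Sum.inl (⟨x, hxv⟩ : {y : α // y ≠ v}), Sum.inr 0),
            s(Sum.inr 1, Sum.inr 2)} : Finset (Sym2 (Vtx v))), e' ∈ phiM v H N := by
          intro e' he'
          refine gset_mem_phi hxN ?_
          rw [mem_gset v H hxv]
          simp only [Finset.mem_insert, Finset.mem_singleton] at he'
          exact Or.inl ⟨hxH, he'⟩
        rcases hk3 with rfl | rfl | rfl
        · refine ⟨s(Sum.inl (⟨x, hxv⟩ : {y : α // y ≠ v}), Sum.inr 0),
            ⟨hgmem _ (by simp), by simp⟩, ?_⟩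
          rintro e' ⟨he', hke'⟩
          rcases mem_phi_elim hx hxN he' with hg | ⟨e, heN, hev, rfl⟩
          · rw [mem_gset v H hxv] at hg
            rcases hg with ⟨-, rfl | rfl⟩ | ⟨h, -⟩
            · rfl
            · simp at hke'
            · exact absurd hxH h
          · rw [inr_mem_map] at hke'
            exact absurd hke'.1 (by decide)
        · refine ⟨s(Sum.inr 1, Sum.inr 2), ⟨hgmem _ (by simp), by simp⟩, ?_⟩
          rintro e' ⟨he', hke'⟩
          rcases mem_phi_elim hx hxN he' with hg | ⟨e, heN, hev, rfl⟩
          · rw [mem_gset v H hxv] at hg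
            rcases hg with ⟨-, rfl | rfl⟩ | ⟨h, -⟩
            · simp at hke'
            · rfl
            · exact absurd hxH h
          · rw [inr_mem_map] at hke'
            exact absurd hke'.1 (by decide)
        · refine ⟨s(Sum.inr 1, Sum.inr 2), ⟨hgmem _ (by simp), by simp⟩, ?_⟩
          rintro e' ⟨he', hke'⟩
          rcases mem_phi_elim hx hxN he' with hg | ⟨e, heN, hev, rfl⟩
          · rw [mem_gset v H hxv] at hg
            rcases hg with ⟨-, rfl | rfl⟩ | ⟨h, -⟩
            · simp at hke'
            · rfl
            · exact absurd hxH h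
          · rw [inr_mem_map] at hke'
            exact absurd hke'.2 hev
      · have hgmem : ∀ e' ∈ ({s(Sum.inl (⟨x, hxv⟩ : {y : α // y ≠ v}), Sum.inr 1),
            s(Sum.inr 0, Sum.inr 2)} : Finset (Sym2 (Vtx v))), e' ∈ phiM v H N := by
          intro e' he'
          refine gset_mem_phi hxN ?_
          rw [mem_gset v H hxv]
          simp only [Finset.mem_insert, Finset.mem_singleton] at he'
          exact Or.inr ⟨hxH, he'⟩
        rcases hk3 with rfl | rfl | rfl
        · refine ⟨s(Sum.inr 0, Sum.inr 2), ⟨hgmem _ (by simp), by simp⟩, ?_⟩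
          rintro e' ⟨he', hke'⟩
          rcases mem_phi_elim hx hxN he' with hg | ⟨e, heN, hev, rfl⟩
          · rw [mem_gset v H hxv] at hg
            rcases hg with ⟨h, -⟩ | ⟨-, rfl | rfl⟩
            · exact absurd h hxH
            · simp at hke'
            · rfl
          · rw [inr_mem_map] at hke'
            exact absurd hke'.1 (by decide)
        · refine ⟨s(Sum.inl (⟨x, hxv⟩ : {y : α // y ≠ v}), Sum.inr 1),
            ⟨hgmem _ (by simp), by simp⟩, ?_⟩
          rintro e' ⟨he', hke'⟩
          rcases mem_phi_elim hx hxN he' with hg | ⟨e, heN, hev, rfl⟩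
          · rw [mem_gset v H hxv] at hg
            rcases hg with ⟨h, -⟩ | ⟨-, rfl | rfl⟩
            · exact absurd h hxH
            · rfl
            · simp at hke'
          · rw [inr_mem_map] at hke'
            exact absurd hke'.1 (by decide)
        · refine ⟨s(Sum.inr 0, Sum.inr 2), ⟨hgmem _ (by simp), by simp⟩, ?_⟩
          rintro e' ⟨he', hke'⟩
          rcases mem_phi_elim hx hxN he' with hg | ⟨e, heN, hev, rfl⟩
          · rw [mem_gset v H hxv] at hg
            rcases hg with ⟨h, -⟩ | ⟨-, rfl | rfl⟩
            · exact absurd h hxH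
            · simp at hke'
            · rfl
          · rw [inr_mem_map] at hke'
            exact absurd hke'.2 hev


variable (v)

noncomputable def psiM (N' : Finset (Sym2 (Vtx v))) : Finset (Sym2 α) :=
  N'.biUnion (Psi v)

lemma mem_psiM {N' : Finset (Sym2 (Vtx v))} {e : Sym2 α} :
    e ∈ psiM v N' ↔ ∃ e' ∈ N', e ∈ Psi v e' := by unfold psiM; exact Finset.mem_biUnion

variable (G H K)

lemma edge_cases {e' : Sym2 (Vtx v)}
    (he' : e' ∈ (SimpleGraph.fromRel (splitRel G v H K)).edgeSet) :
    (∃ a b : {y : α // y ≠ v}, G.Adj a.1 b.1 ∧ e' = s(Sum.inl a, Sum.inl b)) ∨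
    (∃ a : {y : α // y ≠ v}, a.1 ∈ H ∧ e' = s(Sum.inl a, Sum.inr 0)) ∨
    (∃ a : {y : α // y ≠ v}, a.1 ∈ K ∧ e' = s(Sum.inl a, Sum.inr 1)) ∨
    e' = s(Sum.inr 0, Sum.inr 2) ∨ e' = s(Sum.inr 1, Sum.inr 2) := by
  obtain ⟨c, d, rfl⟩ := exists_mk e'
  rw [SimpleGraph.mem_edgeSet] at he'
  match c, d with
  | Sum.inl a, Sum.inl b =>
    rw [adj_ll] at he'
    exact Or.inl ⟨a, b, he', rfl⟩
  | Sum.inl a, Sum.inr k =>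
    rw [adj_lr] at he'
    rcases he' with ⟨rfl, h⟩ | ⟨rfl, h⟩
    · exact Or.inr (Or.inl ⟨a, h, rfl⟩)
    · exact Or.inr (Or.inr (Or.inl ⟨a, h, rfl⟩))
  | Sum.inr k, Sum.inl a =>
    rw [adj_rl] at he'
    rcases he' with ⟨rfl, h⟩ | ⟨rfl, h⟩
    · exact Or.inr (Or.inl ⟨a, h, Sym2.eq_swap⟩)
    · exact Or.inr (Or.inr (Or.inl ⟨a, h, Sym2.eq_swap⟩))
  | Sum.inr j, Sum.inr k =>
    rw [adj_rr] at he'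
    rcases he' with (⟨rfl, rfl⟩ | ⟨rfl, rfl⟩) | (⟨rfl, rfl⟩ | ⟨rfl, rfl⟩)
    · exact Or.inr (Or.inr (Or.inr (Or.inl rfl)))
    · exact Or.inr (Or.inr (Or.inr (Or.inr rfl)))
    · exact Or.inr (Or.inr (Or.inr (Or.inl Sym2.eq_swap)))
    · exact Or.inr (Or.inr (Or.inr (Or.inr Sym2.eq_swap)))

variable {G H K}

/-- Structure of a perfect matching of the split graph. -/
lemma split_structure {N' : Finset (Sym2 (Vtx v))}
    (hN' : IsPM (SimpleGraph.fromRel (splitRel G v H K)) N') :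
    ∃ x' : {y : α // y ≠ v},
      ((x'.1 ∈ H ∧ s(Sum.inl x', Sum.inr 0) ∈ N'
          ∧ s(Sum.inr 1, Sum.inr 2) ∈ N'
          ∧ ∀ e' ∈ N', e' = s(Sum.inl x', Sum.inr 0)
              ∨ e' = s(Sum.inr 1, Sum.inr 2)
              ∨ ∃ a b : {y : α // y ≠ v}, G.Adj a.1 b.1
                  ∧ e' = s(Sum.inl a, Sum.inl b))
      ∨ (x'.1 ∈ K ∧ s(Sum.inl x', Sum.inr 1) ∈ N'
          ∧ s(Sum.inr 0, Sum.inr 2) ∈ N'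
          ∧ ∀ e' ∈ N', e' = s(Sum.inl x', Sum.inr 1)
              ∨ e' = s(Sum.inr 0, Sum.inr 2)
              ∨ ∃ a b : {y : α // y ≠ v}, G.Adj a.1 b.1
                  ∧ e' = s(Sum.inl a, Sum.inl b))) := by
  obtain ⟨eu, ⟨heu, h2u⟩, -⟩ := hN'.2 (Sum.inr 2)
  rcases edge_cases v G H K (hN'.1 eu heu) with ⟨a, b, -, rfl⟩ | ⟨a, -, rfl⟩ | ⟨a, -, rfl⟩
      | rfl | rfl
  · simp at h2u
  · simp at h2u
  · simp at h2u
  · -- case B : u matched to v''; partner of v'' comes from K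
    obtain ⟨e1, ⟨he1, h11⟩, -⟩ := hN'.2 (Sum.inr 1)
    rcases edge_cases v G H K (hN'.1 e1 he1) with ⟨a, b, -, rfl⟩ | ⟨a, -, rfl⟩ | ⟨a, haK, rfl⟩
        | rfl | rfl
    · simp at h11
    · simp at h11
    · refine ⟨a, Or.inr ⟨haK, he1, heu, ?_⟩⟩
      intro e' he'
      rcases edge_cases v G H K (hN'.1 e' he') with ⟨c, d, hcd, rfl⟩ | ⟨c, -, rfl⟩
          | ⟨c, -, rfl⟩ | rfl | rfl
      · exact Or.inr (Or.inr ⟨c, d, hcd, rfl⟩)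
      · -- an edge v'–c would clash with the u–v' edge at v'
        have := hN'.uniq (a := Sum.inr 0) he' heu (by simp) (by simp)
        simp [Sym2.eq_iff] at this
      · exact Or.inl (hN'.uniq (a := Sum.inr 1) he' he1 (by simp) (by simp))
      · exact Or.inr (Or.inl rfl)
      · have := hN'.uniq (a := Sum.inr 2) he' heu (by simp) (by simp)
        simp [Sym2.eq_iff] at this
    · simp at h11
    · have := hN'.uniq (a := Sum.inr 2) he1 heu (by simp) (by simp)
      simp [Sym2.eq_iff] at this
  ·
    obtain ⟨e0, ⟨he0, h00⟩, -⟩ := hN'.2 (Sum.inr 0)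
    rcases edge_cases v G H K (hN'.1 e0 he0) with ⟨a, b, -, rfl⟩ | ⟨a, haH, rfl⟩ | ⟨a, -, rfl⟩
        | rfl | rfl
    · simp at h00
    · refine ⟨a, Or.inl ⟨haH, he0, heu, ?_⟩⟩
      intro e' he'
      rcases edge_cases v G H K (hN'.1 e' he') with ⟨c, d, hcd, rfl⟩ | ⟨c, -, rfl⟩
          | ⟨c, -, rfl⟩ | rfl | rfl
      · exact Or.inr (Or.inr ⟨c, d, hcd, rfl⟩)
      · exact Or.inl (hN'.uniq (a := Sum.inr 0) he' he0 (by simp) (by simp))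
      · have := hN'.uniq (a := Sum.inr 1) he' heu (by simp) (by simp)
        simp [Sym2.eq_iff] at this
      · have := hN'.uniq (a := Sum.inr 2) he' heu (by simp) (by simp)
        simp [Sym2.eq_iff] at this
      · exact Or.inr (Or.inl rfl)
    · simp at h00
    · have := hN'.uniq (a := Sum.inr 2) he0 heu (by simp) (by simp)
      simp [Sym2.eq_iff] at this
    · simp at h00


lemma psi_phi {N : Finset (Sym2 α)} (hN : IsPM G N) : psiM v (phiM v H N) = N := by
  obtain ⟨x, hadj, hxN, hx⟩ := hN.exists_partner v
  have hxv : x ≠ v := hadj.ne'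
  ext e''
  rw [mem_psiM]
  constructor
  · rintro ⟨e', he', he''⟩
    rcases mem_phi_elim hx hxN he' with hg | ⟨e, heN, hev, rfl⟩
    · rw [mem_gset v H hxv] at hg
      rcases hg with ⟨-, rfl | rfl⟩ | ⟨-, rfl | rfl⟩
      · rw [Psi_lr, Finset.mem_singleton] at he''
        subst he''; rwa [Sym2.eq_swap]
      · rw [Psi_rr] at he''; simp at he''
      · rw [Psi_lr, Finset.mem_singleton] at he''
        subst he''; rwa [Sym2.eq_swap]
      · rw [Psi_rr] at he''; simp at he''
    · obtain ⟨a, b, rfl⟩ := exists_mk e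
      simp only [Sym2.mem_iff, not_or] at hev
      have ha : a ≠ v := fun h => hev.1 h.symm
      have hb : b ≠ v := fun h => hev.2 h.symm
      rw [Sym2.map_pair_eq, fwd_ne v ha, fwd_ne v hb, Psi_ll, Finset.mem_singleton] at he''
      subst he''; exact heN
  · intro heN
    by_cases hev : v ∈ e''
    · obtain rfl := hx _ heN hev
      by_cases hxH : x ∈ H
      · exact ⟨s(Sum.inl ⟨x, hxv⟩, Sum.inr 0),
          gset_mem_phi hxN ((mem_gset v H hxv).mpr (Or.inl ⟨hxH, Or.inl rfl⟩)),
          by rw [Psi_lr, Finset.mem_singleton]; exact Sym2.eq_swap⟩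
      · exact ⟨s(Sum.inl ⟨x, hxv⟩, Sum.inr 1),
          gset_mem_phi hxN ((mem_gset v H hxv).mpr (Or.inr ⟨hxH, Or.inl rfl⟩)),
          by rw [Psi_lr, Finset.mem_singleton]; exact Sym2.eq_swap⟩
    · obtain ⟨a, b, rfl⟩ := exists_mk e''
      simp only [Sym2.mem_iff, not_or] at hev
      have ha : a ≠ v := fun h => hev.1 h.symm
      have hb : b ≠ v := fun h => hev.2 h.symm
      refine ⟨Sym2.map (fwd v) (s(a, b)), map_mem_phi heN (by simp [Sym2.mem_iff]; exact ⟨fun h => ha h.symm, fun h => hb h.symm⟩), ?_⟩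
      rw [Sym2.map_pair_eq, fwd_ne v ha, fwd_ne v hb, Psi_ll, Finset.mem_singleton]

lemma inl_mem_pair {a : α} (ha : a ≠ v) {c d : {y : α // y ≠ v}}
    (h : a ∈ s(c.1, d.1)) :
    Sum.inl (⟨a, ha⟩ : {y : α // y ≠ v}) ∈ s((Sum.inl c : Vtx v), Sum.inl d) := by
  rcases Sym2.mem_iff.mp h with h | h
  · exact Sym2.mem_iff.mpr (Or.inl (by rw [Sum.inl.injEq]; exact Subtype.ext h))
  · exact Sym2.mem_iff.mpr (Or.inr (by rw [Sum.inl.injEq]; exact Subtype.ext h))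

lemma psi_pm_aux {N' : Finset (Sym2 (Vtx v))}
    (hN' : IsPM (SimpleGraph.fromRel (splitRel G v H K)) N')
    (x' : {y : α // y ≠ v}) (j j' : Fin 3) (hvx : G.Adj v x'.1)
    (hm : s(Sum.inl x', Sum.inr j) ∈ N')
    (hstr : ∀ e' ∈ N', e' = s(Sum.inl x', Sum.inr j)
        ∨ e' = s(Sum.inr j', Sum.inr 2)
        ∨ ∃ a b : {y : α // y ≠ v}, G.Adj a.1 b.1 ∧ e' = s(Sum.inl a, Sum.inl b)) :
    IsPM G (psiM v N') := by
  constructor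
  · intro e'' he''
    rw [mem_psiM] at he''
    obtain ⟨e', he', he''⟩ := he''
    rcases hstr e' he' with rfl | rfl | ⟨a, b, hab, rfl⟩
    · rw [Psi_lr, Finset.mem_singleton] at he''
      subst he''; exact hvx.symm
    · rw [Psi_rr] at he''; simp at he''
    · rw [Psi_ll, Finset.mem_singleton] at he''
      subst he''; exact hab
  · intro a
    by_cases ha : a = v
    · subst ha
      refine ⟨s(x'.1, a), ⟨(mem_psiM _).mpr ⟨_, hm, by rw [Psi_lr]; simp⟩, by simp⟩, ?_⟩
      rintro e'' ⟨he'', hve⟩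
      rw [mem_psiM] at he''
      obtain ⟨e', he', he''⟩ := he''
      rcases hstr e' he' with rfl | rfl | ⟨c, d, hcd, rfl⟩
      · rw [Psi_lr, Finset.mem_singleton] at he''; exact he''
      · rw [Psi_rr] at he''; simp at he''
      · rw [Psi_ll, Finset.mem_singleton] at he''
        subst he''
        rcases Sym2.mem_iff.mp hve with h | h
        · exact absurd h.symm c.2
        · exact absurd h.symm d.2
    · obtain ⟨ea, ⟨heaN, haea⟩, -⟩ := hN'.2 (Sum.inl ⟨a, ha⟩)
      rcases hstr ea heaN with rfl | rfl | ⟨c, d, hcd, rfl⟩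
      · have hax : (⟨a, ha⟩ : {y : α // y ≠ v}) = x' := by
          rcases Sym2.mem_iff.mp haea with h | h
          · exact Sum.inl.inj h
          · exact absurd h (by simp)
        refine ⟨s(x'.1, v), ⟨(mem_psiM _).mpr ⟨_, hm, by rw [Psi_lr]; simp⟩,
          by rw [← hax]; simp⟩, ?_⟩
        rintro e'' ⟨he'', hae⟩
        rw [mem_psiM] at he''
        obtain ⟨e', he', he''⟩ := he''
        rcases hstr e' he' with rfl | rfl | ⟨c, d, hcd, rfl⟩
        · rw [Psi_lr, Finset.mem_singleton] at he''; exact he''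
        · rw [Psi_rr] at he''; simp at he''
        · rw [Psi_ll, Finset.mem_singleton] at he''
          subst he''
          have hmem := inl_mem_pair v ha hae
          have := hN'.uniq (a := Sum.inl ⟨a, ha⟩) he' heaN hmem haea
          simp [Sym2.eq_iff] at this
      · exact absurd haea (by simp)
      · refine ⟨s(c.1, d.1), ⟨(mem_psiM _).mpr ⟨_, heaN, by rw [Psi_ll]; simp⟩, ?_⟩, ?_⟩
        · rcases Sym2.mem_iff.mp haea with h | h
          · obtain rfl : c = ⟨a, ha⟩ := (Sum.inl.inj h).symm
            simp
          · obtain rfl : d = ⟨a, ha⟩ := (Sum.inl.inj h).symm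
            simp
        · rintro e'' ⟨he'', hae⟩
          rw [mem_psiM] at he''
          obtain ⟨e', he', he''⟩ := he''
          rcases hstr e' he' with rfl | rfl | ⟨c', d', hcd', rfl⟩
          · rw [Psi_lr, Finset.mem_singleton] at he''
            subst he''
            have hax : a = x'.1 := by
              rcases Sym2.mem_iff.mp hae with h | h
              · exact h
              · exact absurd h ha
            have hmem : Sum.inl (⟨a, ha⟩ : {y : α // y ≠ v})
                ∈ s(Sum.inl x', Sum.inr j) := by
              rw [Sym2.mem_iff]
              exact Or.inl (by rw [Sum.inl.injEq]; exact Subtype.ext hax)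
            have := hN'.uniq (a := Sum.inl ⟨a, ha⟩) he' heaN hmem haea
            simp [Sym2.eq_iff] at this
          · rw [Psi_rr] at he''; simp at he''
          · rw [Psi_ll, Finset.mem_singleton] at he''
            subst he''
            have hmem := inl_mem_pair v ha hae
            have hee := hN'.uniq (a := Sum.inl ⟨a, ha⟩) he' heaN hmem haea
            have := congrArg (Sym2.map (bwd v)) hee
            simpa [Sym2.map_pair_eq, bwd] using this


lemma psi_pm (hunion : H ∪ K = ↑(G.neighborSet v)) {N' : Finset (Sym2 (Vtx v))}
    (hN' : IsPM (SimpleGraph.fromRel (splitRel G v H K)) N') : IsPM G (psiM v N') := by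
  obtain ⟨x', hc⟩ := split_structure v hN'
  rcases hc with ⟨hH, hm, hu, hstr⟩ | ⟨hK, hm, hu, hstr⟩
  · refine psi_pm_aux v hN' x' 0 1 ?_ hm hstr
    have : x'.1 ∈ H ∪ K := Or.inl hH
    rw [hunion] at this; exact this
  · refine psi_pm_aux v hN' x' 1 0 ?_ hm hstr
    have : x'.1 ∈ H ∪ K := Or.inr hK
    rw [hunion] at this; exact this

lemma phi_psi_aux {N' : Finset (Sym2 (Vtx v))}
    (hN' : IsPM (SimpleGraph.fromRel (splitRel G v H K)) N')
    (x' : {y : α // y ≠ v}) (j j' : Fin 3) (hvx : G.Adj v x'.1)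
    (hm : s(Sum.inl x', Sum.inr j) ∈ N')
    (hu : s((Sum.inr j' : Vtx v), Sum.inr 2) ∈ N')
    (hstr : ∀ e' ∈ N', e' = s(Sum.inl x', Sum.inr j)
        ∨ e' = s(Sum.inr j', Sum.inr 2)
        ∨ ∃ a b : {y : α // y ≠ v}, G.Adj a.1 b.1 ∧ e' = s(Sum.inl a, Sum.inl b))
    (hgset : gset v H x'.1
        = {s(Sum.inl x', Sum.inr j), s(Sum.inr j', Sum.inr 2)}) :
    phiM v H (psiM v N') = N' := by
  have hM : IsPM G (psiM v N') := psi_pm_aux v hN' x' j j' hvx hm hstr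
  have hxN : s(v, x'.1) ∈ psiM v N' :=
    (mem_psiM _).mpr ⟨_, hm, by rw [Psi_lr, Finset.mem_singleton]; exact Sym2.eq_swap⟩
  have hx : ∀ e ∈ psiM v N', v ∈ e → e = s(v, x'.1) := fun e he hve =>
    hM.uniq (a := v) he hxN hve (by simp)
  ext e'
  constructor
  · intro he'
    rcases mem_phi_elim hx hxN he' with hg | ⟨e, he, hev, rfl⟩
    · rw [hgset] at hg
      rcases Finset.mem_insert.mp hg with rfl | hg
      · exact hm
      · rw [Finset.mem_singleton] at hg; subst hg; exact hu
    · rw [mem_psiM] at he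
      obtain ⟨f', hf', hef⟩ := he
      rcases hstr f' hf' with rfl | rfl | ⟨a, b, hab, rfl⟩
      · rw [Psi_lr, Finset.mem_singleton] at hef
        subst hef; exact absurd (by simp) hev
      · rw [Psi_rr] at hef; simp at hef
      · rw [Psi_ll, Finset.mem_singleton] at hef
        subst hef
        rw [Sym2.map_pair_eq, fwd_ne v a.2, fwd_ne v b.2]
        exact hf'
  · intro he'
    rcases hstr e' he' with rfl | rfl | ⟨a, b, hab, rfl⟩
    · exact gset_mem_phi hxN (by rw [hgset]; simp)
    · exact gset_mem_phi hxN (by rw [hgset]; simp)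
    · have hmem : s(a.1, b.1) ∈ psiM v N' :=
        (mem_psiM _).mpr ⟨_, he', by rw [Psi_ll]; simp⟩
      have hvnot : v ∉ s(a.1, b.1) := by
        rw [Sym2.mem_iff]; push_neg; exact ⟨Ne.symm a.2, Ne.symm b.2⟩
      have := map_mem_phi (H := H) hmem hvnot
      rwa [Sym2.map_pair_eq, fwd_ne v a.2, fwd_ne v b.2] at this

lemma phi_psi (hunion : H ∪ K = ↑(G.neighborSet v)) (hdisj : Disjoint H K)
    {N' : Finset (Sym2 (Vtx v))}
    (hN' : IsPM (SimpleGraph.fromRel (splitRel G v H K)) N') :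
    phiM v H (psiM v N') = N' := by
  obtain ⟨x', hc⟩ := split_structure v hN'
  rcases hc with ⟨hH, hm, hu, hstr⟩ | ⟨hK, hm, hu, hstr⟩
  · refine phi_psi_aux v hN' x' 0 1 ?_ hm hu hstr ?_
    · have : x'.1 ∈ H ∪ K := Or.inl hH
      rw [hunion] at this; exact this
    · unfold gset
      rw [if_pos hH, fwd_ne v x'.2]
  · refine phi_psi_aux v hN' x' 1 0 ?_ hm hu hstr ?_
    · have : x'.1 ∈ H ∪ K := Or.inr hK
      rw [hunion] at this; exact this
    · unfold gset
      rw [if_neg (Set.disjoint_right.mp hdisj hK), fwd_ne v x'.2]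

lemma prod_phi {R : Type*} [CommRing R] (w : Sym2 α → R) (w' : Sym2 (Vtx v) → R)
    (hunion : H ∪ K = ↑(G.neighborSet v))
    (hw1 : ∀ x y : {x : α // x ≠ v}, G.Adj x.1 y.1 →
        w' (s(Sum.inl x, Sum.inl y)) = w (s(x.1, y.1)))
    (hw2 : ∀ x : {x : α // x ≠ v}, x.1 ∈ H →
        w' (s(Sum.inl x, Sum.inr 0)) = w (s(x.1, v)))
    (hw3 : ∀ x : {x : α // x ≠ v}, x.1 ∈ K →
        w' (s(Sum.inl x, Sum.inr 1)) = w (s(x.1, v)))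
    (hw4 : w' (s((Sum.inr 0 : Vtx v), Sum.inr 2)) = 1)
    (hw5 : w' (s((Sum.inr 1 : Vtx v), Sum.inr 2)) = 1)
    {N : Finset (Sym2 α)} (hN : IsPM G N) :
    ∏ e' ∈ phiM v H N, w' e' = ∏ e ∈ N, w e := by
  obtain ⟨x, hadj, hxN, hx⟩ := hN.exists_partner v
  have hxv : x ≠ v := hadj.ne'
  have hxHK : x ∈ H ∪ K := by rw [hunion]; exact hadj
  have hdisjoint : Set.PairwiseDisjoint (↑N) (Phi v H) := by
    intro e he f hf hef
    rw [Function.onFun, Finset.disjoint_left]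
    intro e' he' hf'
    simp only [Finset.mem_coe] at he hf
    by_cases hev : v ∈ e <;> by_cases hfv : v ∈ f
    · exact hef ((hx e he hev).trans (hx f hf hfv).symm)
    · obtain rfl := hx e he hev
      rw [Phi_mk_v] at he'
      rw [Phi_of_not_mem v _ hfv, Finset.mem_singleton] at hf'
      subst hf'
      rw [mem_gset v H hxv] at he'
      rcases he' with ⟨-, h | h⟩ | ⟨-, h | h⟩
      · have : Sum.inr (0 : Fin 3) ∈ Sym2.map (fwd v) f := by rw [h]; simp
        exact absurd ((inr_mem_map v).mp this).1 (by decide)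
      · have : Sum.inr (2 : Fin 3) ∈ Sym2.map (fwd v) f := by rw [h]; simp
        exact hfv ((inr_mem_map v).mp this).2
      · have : Sum.inr (1 : Fin 3) ∈ Sym2.map (fwd v) f := by rw [h]; simp
        exact absurd ((inr_mem_map v).mp this).1 (by decide)
      · have : Sum.inr (2 : Fin 3) ∈ Sym2.map (fwd v) f := by rw [h]; simp
        exact hfv ((inr_mem_map v).mp this).2
    · obtain rfl := hx f hf hfv
      rw [Phi_mk_v] at hf'
      rw [Phi_of_not_mem v _ hev, Finset.mem_singleton] at he'
      subst he'
      rw [mem_gset v H hxv] at hf'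
      rcases hf' with ⟨-, h | h⟩ | ⟨-, h | h⟩
      · have : Sum.inr (0 : Fin 3) ∈ Sym2.map (fwd v) e := by rw [h]; simp
        exact absurd ((inr_mem_map v).mp this).1 (by decide)
      · have : Sum.inr (2 : Fin 3) ∈ Sym2.map (fwd v) e := by rw [h]; simp
        exact hev ((inr_mem_map v).mp this).2
      · have : Sum.inr (1 : Fin 3) ∈ Sym2.map (fwd v) e := by rw [h]; simp
        exact absurd ((inr_mem_map v).mp this).1 (by decide)
      · have : Sum.inr (2 : Fin 3) ∈ Sym2.map (fwd v) e := by rw [h]; simp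
        exact hev ((inr_mem_map v).mp this).2
    · rw [Phi_of_not_mem v _ hev, Finset.mem_singleton] at he'
      rw [Phi_of_not_mem v _ hfv, Finset.mem_singleton] at hf'
      subst he'
      exact hef (Sym2.map.injective (fwd_inj v) hf')
  unfold phiM
  rw [Finset.prod_biUnion hdisjoint]
  apply Finset.prod_congr rfl
  intro e he
  by_cases hev : v ∈ e
  · obtain rfl := hx e he hev
    rw [Phi_mk_v]
    unfold gset
    have hswap : s(x, v) = s(v, x) := Sym2.eq_swap
    by_cases hxH : x ∈ H
    · rw [if_pos hxH, fwd_ne v hxv,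
        Finset.prod_insert (by simp [Sym2.eq_iff]), Finset.prod_singleton,
        hw2 ⟨x, hxv⟩ hxH, hw5, mul_one, hswap]
    · rw [if_neg hxH, fwd_ne v hxv,
        Finset.prod_insert (by simp [Sym2.eq_iff]), Finset.prod_singleton,
        hw3 ⟨x, hxv⟩ (hxHK.resolve_left hxH), hw4, mul_one, hswap]
  · rw [Phi_of_not_mem v _ hev, Finset.prod_singleton]
    obtain ⟨a, b, rfl⟩ := exists_mk e
    simp only [Sym2.mem_iff, not_or] at hev
    have ha : a ≠ v := fun h => hev.1 h.symm
    have hb : b ≠ v := fun h => hev.2 h.symm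
    rw [Sym2.map_pair_eq, fwd_ne v ha, fwd_ne v hb]
    exact hw1 ⟨a, ha⟩ ⟨b, hb⟩ (hN.1 _ he)

end VSplit

/-- **Vertex-Splitting Lemma.** -/
theorem vertex_splitting_lemma {R : Type*} [CommRing R] {α : Type*} [Fintype α]
    [DecidableEq α]
    (G : SimpleGraph α) (w : Sym2 α → R) (v : α) (H K : Set α)
    (hunion : H ∪ K = G.neighborSet v) (hdisj : Disjoint H K)
    (w' : Sym2 ({x : α // x ≠ v} ⊕ Fin 3) → R)
    (hw1 : ∀ x y : {x : α // x ≠ v}, G.Adj x.1 y.1 →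
        w' (Sym2.mk (Sum.inl x) (Sum.inl y)) = w (Sym2.mk x.1 y.1))
    (hw2 : ∀ x : {x : α // x ≠ v}, x.1 ∈ H →
        w' (Sym2.mk (Sum.inl x) (Sum.inr 0)) = w (Sym2.mk x.1 v))
    (hw3 : ∀ x : {x : α // x ≠ v}, x.1 ∈ K →
        w' (Sym2.mk (Sum.inl x) (Sum.inr 1)) = w (Sym2.mk x.1 v))
    (hw4 : w' (Sym2.mk (Sum.inr 0) (Sum.inr 2)) = 1)
    (hw5 : w' (Sym2.mk (Sum.inr 1) (Sum.inr 2)) = 1) :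
    MGF Finset.univ G w
      = MGF Finset.univ (SimpleGraph.fromRel (splitRel G v H K)) w' := by
  rw [MGF_univ, MGF_univ]
  refine Finset.sum_nbij' (VSplit.phiM v H) (VSplit.psiM v) ?_ ?_ ?_ ?_ ?_
  · intro N hN
    rw [Finset.mem_filter] at hN ⊢
    exact ⟨Finset.mem_univ _, VSplit.phi_pm hunion hN.2⟩
  · intro N' hN'
    rw [Finset.mem_filter] at hN' ⊢
    exact ⟨Finset.mem_univ _, VSplit.psi_pm v hunion hN'.2⟩
  · intro N hN
    rw [Finset.mem_filter] at hN
    exact VSplit.psi_phi v hN.2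
  · intro N' hN'
    rw [Finset.mem_filter] at hN'
    exact VSplit.phi_psi v hunion hdisj hN'.2
  · intro N hN
    rw [Finset.mem_filter] at hN
    exact (VSplit.prod_phi v w w' hunion hw1 hw2 hw3 hw4 hw5 hN.2).symm
end

section
/- Let m, n, a, b be positive integers and let q be a real number with 0 < q < 1. Let A and B be disjoint sets with A ∪ B = [a+b] = {1, …, a+b}, |A| = a and |B| = b, and set A' := [m] ∪ {m + x : x ∈ A} ∪ {m+a+b+j : 1 ≤ j ≤ n} and B' := [m] ∪ {m + y : y ∈ B} ∪ {m+a+b+j : 1 ≤ j ≤ n}. Then S_q(A') · S_q(B') = q^{abn + (a+b)·binom(n+1,2)} · ∏_{i=1}^{a+b} (q^i;q)_m · (q^{a+b−i+1};q)_n · ∏_{j=1}^{n} (q^{a+b+j};q)_m² · [H_q(a) · H_q(b) · H_q(m)² · H_q(n)² / (H_q(m+n+a) · H_q(m+n+b))] · S_q(A) · S_q(B). -/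
open scoped Classical

/-- The shifted q-factorial `(a;q)_k = (1-a)(1-aq)⋯(1-aq^{k-1})`. -/
noncomputable def qPoch (a q : ℝ) (k : ℕ) : ℝ := ∏ i ∈ Finset.range k, (1 - a * q ^ i)

/-- The hyper q-shifted factor `H_q(n) = ∏_{k=1}^{n-1} (q;q)_k`. -/
noncomputable def Hq (q : ℝ) (n : ℕ) : ℝ := ∏ k ∈ Finset.range n, qPoch q q k

/-- `∏_{u < v in U} (q^v - q^u)`. -/
noncomputable def vand (q : ℝ) (U : Finset ℕ) : ℝ :=
  ∏ u ∈ U, ∏ v ∈ U.filter (fun v => u < v), (q ^ v - q ^ u)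

/-- For `U = {u₁ < u₂ < ⋯ < u_k}` a finite set of positive integers,
`S_q(U) = q^{∑ (uᵢ - i)} ∏_{i<j} (q^{u_j} - q^{u_i})/(q^j - q^i)`, the Schur
function `s_{λ(U)}(q, q², …, q^k)`. -/
noncomputable def Sq (q : ℝ) (U : Finset ℕ) : ℝ :=
  q ^ ((∑ u ∈ U, (u : ℤ)) - ((U.card : ℤ) * (U.card + 1)) / 2) *
    vand q U / vand q (Finset.Icc 1 U.card)

/-!
Write `S_q(U)` as a quotient of alternants `a(U) / a([#U])`, where
`a(U) = q^{∑ U} ∏_{u<v} (q^v - q^u)`. The set `A'` arises from `A ⊆ [s]` (with `s = a + b`) by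
appending the block `s+1, …, s+n` and then prepending `[m]`, shifting everything else by `m`.
Each step factors `a` into the alternant of the old set, the alternant of an interval, and a cross
product of q-Pochhammer symbols. The same factorisation applied to the denominator `a([#U + n])`,
resp. `a([m + #U])`, cancels the interval factors and leaves ratios of `H_q`. Multiplying the
results for `A` and `B` and using `A ∪ B = [a+b]` merges the Pochhammer products, and the powers
of `q` combine because `|λ(A)| + |λ(B)| = ab`.
-/

open Finset

theorem sum_Icc_id_mul_two (k : ℕ) : (∑ i ∈ Icc 1 k, i) * 2 = k * (k + 1) := by
  induction k with
  | zero => simp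
  | succ k ih => rw [sum_Icc_succ_top (by omega), add_mul, ih]; ring

theorem Icc_add_one_eq_image (s n : ℕ) : Icc (s + 1) (s + n) = (Icc 1 n).image (s + ·) := by
  rw [image_add_left_Icc, add_comm s 1]

theorem Icc_one_add (m k : ℕ) : Icc 1 (m + k) = Icc 1 m ∪ (Icc 1 k).image (m + ·) := by
  rw [← Icc_add_one_eq_image]
  ext x
  simp only [mem_Icc, mem_union]
  omega

theorem sum_Icc_one_add (a b : ℕ) :
    ∑ i ∈ Icc 1 (a + b), i = ∑ i ∈ Icc 1 a, i + ∑ i ∈ Icc 1 b, i + a * b := by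
  rw [Icc_one_add, sum_union, sum_image (by simp), sum_add_distrib, sum_const, Nat.card_Icc,
    smul_eq_mul, add_tsub_cancel_right]
  · ring
  · exact disjoint_left.2 fun x hx hx' => by simp only [mem_Icc, mem_image] at hx hx'; omega

theorem sum_Icc_one_card_le_sum {U : Finset ℕ} (hU : ∀ u ∈ U, 0 < u) :
    ∑ i ∈ Icc 1 #U, i ≤ ∑ u ∈ U, u := by
  induction U using Finset.induction_on_max with
  | empty => simp
  | insert M S hlt ih =>
    have hM : M ∉ S := fun hM => (hlt M hM).false
    have hS : #S ≤ M - 1 := by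
      simpa using card_le_card fun x hx => mem_Icc.2
        ⟨hU x (mem_insert_of_mem hx), Nat.le_sub_one_of_lt (hlt x hx)⟩
    have hM0 := hU M (mem_insert_self M S)
    rw [card_insert_of_notMem hM, sum_Icc_succ_top (by omega), sum_insert hM]
    have := ih fun u hu => hU u (mem_insert_of_mem hu)
    omega

section Vandermonde

variable (q : ℝ)

theorem vand_union_of_lt {U V : Finset ℕ} (h : ∀ u ∈ U, ∀ v ∈ V, u < v) :
    vand q (U ∪ V) = vand q U * vand q V * ∏ u ∈ U, ∏ v ∈ V, (q ^ v - q ^ u) := by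
  have hdisj : Disjoint U V :=
    disjoint_left.2 fun x hU hV => (h x hU x hV).false
  have hU : ∀ u ∈ U, ∏ v ∈ (U ∪ V).filter (u < ·), (q ^ v - q ^ u)
      = (∏ v ∈ U.filter (u < ·), (q ^ v - q ^ u)) * ∏ v ∈ V, (q ^ v - q ^ u) := by
    intro u hu
    have hfilter : (U ∪ V).filter (u < ·) = U.filter (u < ·) ∪ V := by
      rw [filter_union, filter_true_of_mem (h u hu)]
    rw [hfilter, prod_union (hdisj.mono_left (filter_subset _ _))]
  have hV : ∀ u ∈ V, ∏ v ∈ (U ∪ V).filter (u < ·), (q ^ v - q ^ u)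
      = ∏ v ∈ V.filter (u < ·), (q ^ v - q ^ u) := by
    intro u hu
    rw [filter_union, filter_false_of_mem fun v hv => (h v hv u hu).asymm, empty_union]
  unfold vand
  rw [prod_union hdisj, prod_congr rfl hU, prod_congr rfl hV,
    prod_mul_distrib]
  ring

theorem vand_insert_of_lt {S : Finset ℕ} {M : ℕ} (h : ∀ u ∈ S, u < M) :
    vand q (insert M S) = vand q S * ∏ u ∈ S, (q ^ M - q ^ u) := by
  have hvand : vand q {M} = 1 := by simp [vand, filter_singleton]
  rw [insert_eq, union_comm, vand_union_of_lt q fun u hu v hv => mem_singleton.1 hv ▸ h u hu,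
    hvand, mul_one]
  simp

theorem vand_image_add (c : ℕ) (V : Finset ℕ) :
    vand q (V.image (c + ·)) = q ^ (c * (#V).choose 2) * vand q V := by
  induction V using Finset.induction_on_max with
  | empty => simp [vand]
  | insert M S hlt ih =>
    have hM : M ∉ S := fun hM => (hlt M hM).false
    have hcross : ∏ u ∈ S, (q ^ (c + M) - q ^ (c + u))
        = q ^ (c * #S) * ∏ u ∈ S, (q ^ M - q ^ u) := by
      rw [pow_mul, ← prod_const, ← prod_mul_distrib]
      exact prod_congr rfl fun u _ => by ring
    rw [image_insert, vand_insert_of_lt q (by simpa using hlt), vand_insert_of_lt q hlt,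
      ih, prod_image (by simp), hcross, card_insert_of_notMem hM, Nat.choose_succ_succ',
      Nat.choose_one_right, mul_add, pow_add]
    ring

end Vandermonde

theorem vand_ne_zero {q : ℝ} (hq0 : 0 < q) (hq1 : q ≠ 1) (U : Finset ℕ) : vand q U ≠ 0 :=
  prod_ne_zero_iff.2 fun _ _ => prod_ne_zero_iff.2 fun _ hv =>
    sub_ne_zero.2 fun h => (mem_filter.1 hv).2.ne' (pow_right_injective₀ hq0 hq1 h)

section QPochhammer

variable (q : ℝ)

theorem qPoch_succ' (a : ℝ) (k : ℕ) : qPoch a q (k + 1) = (1 - a) * qPoch (a * q) q k := by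
  simp only [qPoch, prod_range_succ', pow_zero, mul_one, pow_succ']
  ring_nf

theorem qPoch_succ (a : ℝ) (k : ℕ) : qPoch a q (k + 1) = qPoch a q k * (1 - a * q ^ k) :=
  prod_range_succ _ _

theorem qPoch_add (a : ℝ) (k m : ℕ) :
    qPoch a q (k + m) = qPoch a q k * qPoch (a * q ^ k) q m := by
  simp only [qPoch, prod_range_add, pow_add, mul_assoc]

theorem Hq_succ (k : ℕ) : Hq q (k + 1) = Hq q k * qPoch q q k := prod_range_succ _ _

theorem Hq_mul_Hq_mul_prod_qPoch (m k : ℕ) :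
    Hq q m * Hq q k * ∏ j ∈ Icc 1 k, qPoch (q ^ j) q m = Hq q (m + k) := by
  induction k with
  | zero => simp [Hq]
  | succ k ih =>
    rw [prod_Icc_succ_top (by omega), Hq_succ, ← add_assoc, Hq_succ, ← ih, add_comm m k,
      qPoch_add, ← pow_succ']
    ring

theorem prod_Icc_pow_add_sub_pow (m v : ℕ) :
    ∏ i ∈ Icc 1 m, (q ^ (m + v) - q ^ i)
      = (-1) ^ m * q ^ (∑ i ∈ Icc 1 m, i) * qPoch (q ^ v) q m := by
  induction m generalizing v with
  | zero => simp [qPoch]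
  | succ m ih =>
    rw [prod_Icc_succ_top (by omega), sum_Icc_succ_top (by omega),
      show m + 1 + v = m + (v + 1) by ring, ih, qPoch_succ', ← pow_succ]
    ring

theorem prod_Icc_pow_add_sub_pow_of_le {s x : ℕ} (hx : x ≤ s) (n : ℕ) :
    ∏ j ∈ Icc 1 n, (q ^ (s + j) - q ^ x)
      = (-1) ^ n * q ^ (n * x) * qPoch (q ^ (s - x + 1)) q n := by
  induction n with
  | zero => simp [qPoch]
  | succ n ih =>
    rw [prod_Icc_succ_top (by omega), ih, qPoch_succ,
      show s + (n + 1) = x + (s - x + 1 + n) by omega]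
    ring

end QPochhammer

theorem Hq_ne_zero {q : ℝ} (hq0 : 0 < q) (hq1 : q ≠ 1) (k : ℕ) : Hq q k ≠ 0 :=
  prod_ne_zero_iff.2 fun _ _ => prod_ne_zero_iff.2 fun i _ => by
    rw [← pow_succ', sub_ne_zero, ne_comm, Ne, pow_eq_one_iff_of_nonneg hq0.le i.succ_ne_zero]
    exact hq1

/-- `alternant q U` is the alternant `det ((q ^ i) ^ u_j)` in the variables `q, q², …, q^#U`,
so that `Sq` is a quotient of two alternants (Jacobi's bialternant formula). -/
noncomputable def alternant (q : ℝ) (U : Finset ℕ) : ℝ := q ^ (∑ u ∈ U, u) * vand q U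

theorem Sq_eq_alternant_div {q : ℝ} (hq : q ≠ 0) (U : Finset ℕ) :
    Sq q U = alternant q U / alternant q (Icc 1 #U) := by
  have hgauss : ((#U : ℤ) * (#U + 1)) / 2 = ((∑ i ∈ Icc 1 #U, i : ℕ) : ℤ) := by
    rw [Int.ediv_eq_of_eq_mul_left two_ne_zero]
    exact_mod_cast (sum_Icc_id_mul_two #U).symm
  rw [Sq, alternant, alternant, hgauss, zpow_sub₀ hq, zpow_natCast, ← Nat.cast_sum,
    zpow_natCast]
  field_simp

theorem alternant_ne_zero {q : ℝ} (hq0 : 0 < q) (hq1 : q ≠ 1) (U : Finset ℕ) :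
    alternant q U ≠ 0 :=
  mul_ne_zero (pow_ne_zero _ hq0.ne') (vand_ne_zero hq0 hq1 U)

section Alternant

variable (q : ℝ)

theorem alternant_union_image_add (c : ℕ) {U V : Finset ℕ} (h : ∀ u ∈ U, ∀ v ∈ V, u < c + v) :
    alternant q (U ∪ V.image (c + ·)) = q ^ (c * (#V + 1).choose 2) * alternant q U *
      alternant q V * ∏ u ∈ U, ∏ v ∈ V, (q ^ (c + v) - q ^ u) := by
  have h' : ∀ u ∈ U, ∀ w ∈ V.image (c + ·), u < w := by
    simpa only [forall_mem_image] using h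
  have hdisj : Disjoint U (V.image (c + ·)) :=
    disjoint_left.2 fun x hU hV => (h' x hU x hV).false
  rw [alternant, sum_union hdisj, sum_image (by simp), sum_add_distrib, sum_const, smul_eq_mul,
    vand_union_of_lt q h', vand_image_add, prod_congr rfl fun u _ => prod_image (by simp),
    alternant, alternant, Nat.choose_succ_succ', Nat.choose_one_right]
  ring

theorem alternant_Icc_union_image_add (m : ℕ) {V : Finset ℕ} (hV : ∀ v ∈ V, 0 < v) :
    alternant q (Icc 1 m ∪ V.image (m + ·)) = q ^ (m * (#V + 1).choose 2) *
      alternant q (Icc 1 m) * ((-1) ^ m * q ^ (∑ i ∈ Icc 1 m, i)) ^ #V *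
      (∏ v ∈ V, qPoch (q ^ v) q m) * alternant q V := by
  rw [alternant_union_image_add q m fun u hu v hv => by
      have := hV v hv; simp only [mem_Icc] at hu; omega,
    prod_comm, prod_congr rfl fun v _ => prod_Icc_pow_add_sub_pow q m v, prod_mul_distrib,
    prod_const]
  ring

theorem alternant_Icc_add (m k : ℕ) :
    alternant q (Icc 1 (m + k)) = q ^ (m * (k + 1).choose 2) *
      alternant q (Icc 1 m) * ((-1) ^ m * q ^ (∑ i ∈ Icc 1 m, i)) ^ k *
      (∏ j ∈ Icc 1 k, qPoch (q ^ j) q m) * alternant q (Icc 1 k) := by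
  rw [Icc_one_add, alternant_Icc_union_image_add q m fun v hv => (mem_Icc.1 hv).1, Nat.card_Icc,
    add_tsub_cancel_right]

end Alternant

section Schur

variable {q : ℝ} (hq0 : 0 < q) (hq1 : q ≠ 1)
include hq0 hq1

theorem Sq_Icc_union_image_add (m : ℕ) {V : Finset ℕ} (hV : ∀ v ∈ V, 0 < v) :
    Sq q (Icc 1 m ∪ V.image (m + ·)) * Hq q (m + #V)
      = Hq q m * Hq q #V * (∏ v ∈ V, qPoch (q ^ v) q m) * Sq q V := by
  have hdisj : Disjoint (Icc 1 m) (V.image (m + ·)) := by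
    refine disjoint_left.2 fun x hx hx' => ?_
    obtain ⟨v, hv, rfl⟩ := mem_image.1 hx'
    have := hV v hv
    simp only [mem_Icc] at hx
    omega
  have hcard : #(Icc 1 m ∪ V.image (m + ·)) = m + #V := by
    rw [card_union_of_disjoint hdisj, card_image_of_injective _ (add_right_injective m),
      Nat.card_Icc, add_tsub_cancel_right]
  have hden := alternant_ne_zero hq0 hq1 (Icc 1 (m + #V))
  rw [alternant_Icc_add] at hden
  rw [Sq_eq_alternant_div hq0.ne', Sq_eq_alternant_div hq0.ne', hcard, alternant_Icc_add,
    alternant_Icc_union_image_add q m hV, ← Hq_mul_Hq_mul_prod_qPoch, div_mul_eq_mul_div,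
    mul_div_assoc', div_eq_div_iff hden (alternant_ne_zero hq0 hq1 _)]
  ring

/-- Both subtractions are exact: `#U ≤ s`, and `∑ U - (1 + ⋯ + #U)` is the size of the partition
`λ(U)`. -/
theorem Sq_union_Icc {s : ℕ} {U : Finset ℕ} (hU : U ⊆ Icc 1 s) (n : ℕ) :
    Sq q (U ∪ Icc (s + 1) (s + n)) * Hq q (#U + n)
      = q ^ ((s - #U) * (n + 1).choose 2 + n * (∑ x ∈ U, x - ∑ i ∈ Icc 1 #U, i)) *
        Hq q #U * Hq q n * (∏ x ∈ U, qPoch (q ^ (s - x + 1)) q n) * Sq q U := by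
  have hUs : ∀ x ∈ U, 1 ≤ x ∧ x ≤ s := fun x hx => mem_Icc.1 (hU hx)
  have hlt : ∀ x ∈ U, ∀ j ∈ Icc 1 n, x < s + j := fun x hx j hj => by
    have := hUs x hx; simp only [mem_Icc] at hj; omega
  have hcard : #(U ∪ Icc (s + 1) (s + n)) = #U + n := by
    rw [card_union_of_disjoint (disjoint_left.2 fun x hx hx' => by
      have := hUs x hx; simp only [mem_Icc] at hx'; omega), Nat.card_Icc]
    omega
  have hcross : ∏ x ∈ U, ∏ j ∈ Icc 1 n, (q ^ (s + j) - q ^ x)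
      = (-1) ^ (n * #U) * q ^ (n * ∑ x ∈ U, x) * ∏ x ∈ U, qPoch (q ^ (s - x + 1)) q n := by
    rw [prod_congr rfl fun x hx => prod_Icc_pow_add_sub_pow_of_le q (hUs x hx).2 n,
      prod_mul_distrib, prod_mul_distrib, prod_const, prod_pow_eq_pow_sum, mul_sum, pow_mul]
  obtain ⟨d, rfl⟩ := Nat.exists_eq_add_of_le (by simpa using card_le_card hU)
  obtain ⟨e, he⟩ := Nat.exists_eq_add_of_le (sum_Icc_one_card_le_sum fun x hx => (hUs x hx).1)
  have hden := alternant_ne_zero hq0 hq1 (Icc 1 (#U + n))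
  rw [alternant_Icc_add] at hden
  rw [Sq_eq_alternant_div hq0.ne', Sq_eq_alternant_div hq0.ne', hcard, alternant_Icc_add,
    Icc_add_one_eq_image, alternant_union_image_add q _ hlt, hcross, Nat.card_Icc,
    add_tsub_cancel_right, ← Hq_mul_Hq_mul_prod_qPoch, he, add_tsub_cancel_left,
    add_tsub_cancel_left, div_mul_eq_mul_div, mul_div_assoc',
    div_eq_div_iff hden (alternant_ne_zero hq0 hq1 _)]
  ring

theorem Sq_Icc_union_image_add_union_Icc {m n s : ℕ} {U : Finset ℕ} (hU : U ⊆ Icc 1 s) :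
    Sq q (Icc 1 m ∪ U.image (m + ·) ∪ Icc (m + s + 1) (m + s + n)) * Hq q (m + n + #U)
      = q ^ ((s - #U) * (n + 1).choose 2 + n * (∑ x ∈ U, x - ∑ i ∈ Icc 1 #U, i)) *
        (Hq q m * Hq q n * Hq q #U) * (∏ x ∈ U, qPoch (q ^ x) q m) *
        (∏ j ∈ Icc 1 n, qPoch (q ^ (s + j)) q m) *
        (∏ x ∈ U, qPoch (q ^ (s - x + 1)) q n) * Sq q U := by
  set V := U ∪ Icc (s + 1) (s + n)
  have hdisj : Disjoint U (Icc (s + 1) (s + n)) := disjoint_left.2 fun x hx hx' => by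
    have := mem_Icc.1 (hU hx); simp only [mem_Icc] at hx'; omega
  have hset : Icc 1 m ∪ U.image (m + ·) ∪ Icc (m + s + 1) (m + s + n)
      = Icc 1 m ∪ V.image (m + ·) := by
    rw [image_union, image_add_left_Icc, union_assoc, add_assoc, add_assoc]
  have hVpos : ∀ v ∈ V, 0 < v := fun v hv => by
    rcases mem_union.1 hv with hv | hv
    · exact (mem_Icc.1 (hU hv)).1
    · simp only [mem_Icc] at hv; omega
  have hVcard : #V = #U + n := by
    rw [card_union_of_disjoint hdisj, Nat.card_Icc]
    omega
  have hprodV : ∏ v ∈ V, qPoch (q ^ v) q m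
      = (∏ x ∈ U, qPoch (q ^ x) q m) * ∏ j ∈ Icc 1 n, qPoch (q ^ (s + j)) q m := by
    rw [prod_union hdisj, Icc_add_one_eq_image, prod_image (by simp)]
  have hprepend := Sq_Icc_union_image_add hq0 hq1 m hVpos
  rw [hVcard] at hprepend
  rw [hset, show m + n + #U = m + (#U + n) by ring, hprepend]
  calc _ = Hq q m * (∏ v ∈ V, qPoch (q ^ v) q m) * (Sq q V * Hq q (#U + n)) := by ring
    _ = _ := by rw [Sq_union_Icc hq0 hq1 hU n, hprodV]; ring

end Schur

theorem schur_shift_lemma_general (m n a b : ℕ)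
    (q : ℝ) (hq0 : 0 < q) (hq1 : q < 1)
    (A B : Finset ℕ) (hdisj : Disjoint A B) (hunion : A ∪ B = Finset.Icc 1 (a + b))
    (hA : A.card = a) (hB : B.card = b) :
    Sq q (Finset.Icc 1 m ∪ A.image (fun x => m + x) ∪
        Finset.Icc (m + a + b + 1) (m + a + b + n)) *
      Sq q (Finset.Icc 1 m ∪ B.image (fun y => m + y) ∪
        Finset.Icc (m + a + b + 1) (m + a + b + n))
      = q ^ (a * b * n + (a + b) * Nat.choose (n + 1) 2) *
        (∏ i ∈ Finset.Icc 1 (a + b),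
          qPoch (q ^ i) q m * qPoch (q ^ (a + b - i + 1)) q n) *
        (∏ j ∈ Finset.Icc 1 n, qPoch (q ^ (a + b + j)) q m ^ 2) *
        (Hq q a * Hq q b * Hq q m ^ 2 * Hq q n ^ 2 /
          (Hq q (m + n + a) * Hq q (m + n + b))) *
        Sq q A * Sq q B := by
  have hAsub : A ⊆ Icc 1 (a + b) := hunion ▸ subset_union_left
  have hBsub : B ⊆ Icc 1 (a + b) := hunion ▸ subset_union_right
  have hA' := Sq_Icc_union_image_add_union_Icc hq0 hq1.ne (m := m) (n := n) hAsub
  have hB' := Sq_Icc_union_image_add_union_Icc hq0 hq1.ne (m := m) (n := n) hBsub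
  have hsize : (∑ x ∈ A, x - ∑ i ∈ Icc 1 a, i) + (∑ x ∈ B, x - ∑ i ∈ Icc 1 b, i) = a * b := by
    have hsum : ∑ x ∈ A, x + ∑ x ∈ B, x = ∑ i ∈ Icc 1 a, i + ∑ i ∈ Icc 1 b, i + a * b := by
      rw [← sum_union hdisj, hunion, sum_Icc_one_add]
    have hAle := hA ▸ sum_Icc_one_card_le_sum fun x hx => (mem_Icc.1 (hAsub hx)).1
    have hBle := hB ▸ sum_Icc_one_card_le_sum fun x hx => (mem_Icc.1 (hBsub hx)).1
    omega
  have hprod : ∀ f : ℕ → ℝ, ∏ i ∈ Icc 1 (a + b), f i = (∏ x ∈ A, f x) * ∏ x ∈ B, f x :=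
    fun f => by rw [← hunion, prod_union hdisj]
  rw [hA, ← add_assoc] at hA'
  rw [hB, ← add_assoc] at hB'
  rw [eq_div_of_mul_eq (Hq_ne_zero hq0 hq1.ne _) hA',
    eq_div_of_mul_eq (Hq_ne_zero hq0 hq1.ne _) hB', prod_mul_distrib, hprod, hprod, prod_pow,
    ← hsize, Nat.add_sub_cancel_left, Nat.add_sub_cancel]
  ring

theorem schur_shift_lemma (m n a b : ℕ) (hm : 0 < m) (hn : 0 < n) (ha : 0 < a)
    (hb : 0 < b) (q : ℝ) (hq0 : 0 < q) (hq1 : q < 1)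
    (A B : Finset ℕ) (hdisj : Disjoint A B) (hunion : A ∪ B = Finset.Icc 1 (a + b))
    (hA : A.card = a) (hB : B.card = b) :
    Sq q (Finset.Icc 1 m ∪ A.image (fun x => m + x) ∪
        Finset.Icc (m + a + b + 1) (m + a + b + n)) *
      Sq q (Finset.Icc 1 m ∪ B.image (fun y => m + y) ∪
        Finset.Icc (m + a + b + 1) (m + a + b + n))
      = q ^ (a * b * n + (a + b) * Nat.choose (n + 1) 2) *
        (∏ i ∈ Finset.Icc 1 (a + b),
          qPoch (q ^ i) q m * qPoch (q ^ (a + b - i + 1)) q n) *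
        (∏ j ∈ Finset.Icc 1 n, qPoch (q ^ (a + b + j)) q m ^ 2) *
        (Hq q a * Hq q b * Hq q m ^ 2 * Hq q n ^ 2 /
          (Hq q (m + n + a) * Hq q (m + n + b))) *
        Sq q A * Sq q B :=
  schur_shift_lemma_general m n a b q hq0 hq1 A B hdisj hunion hA hB
end

section
/- Let a and b be positive integers, let 1 ≤ s_1 < s_2 < ⋯ < s_a ≤ a+b be integers, and let {r_1 < r_2 < ⋯ < r_b} = {1, …, a+b} ∖ {s_1, …, s_a}. Then for every real number q with 0 < q < 1, S_{q^{−1}}({s_1,…,s_a}) = q^{−(a+1)·(ab − ∑_{i=1}^{b}(r_i − i))} · S_q({s_1,…,s_a}), where S_{q^{−1}} denotes the same expression as S_q with q replaced by q^{−1}. -/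
open scoped Classical

/-!
Inverting the base in a factor of the Vandermonde product gives
`q⁻ᵛ - q⁻ᵘ = -q^{-(u+v)} (qᵛ - qᵘ)`, and every `u ∈ U` lies in `#U - 1` pairs, so
`vand q⁻¹ U = (-1)^(#U choose 2) q^{(1-#U) ΣU} vand q U`. The sign only depends on `#U`, so it
cancels in the ratio defining `Sq`, and `Sq q⁻¹ U = q^{-(#U+1) |λ(U)|} Sq q U` with
`|λ(U)| = ΣU - #U(#U+1)/2`. For `U ⊆ [a+b]` the partitions of `U` and of its complement fill the
`a × b` box, because `ΣU + Σ([a+b] \ U) = (a+b)(a+b+1)/2`.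
-/

open Finset

theorem card_filter_lt_add_card_filter_gt {U : Finset ℕ} {u : ℕ} (hu : u ∈ U) :
    #{v ∈ U | u < v} + #{v ∈ U | v < u} = #U - 1 := by
  rw [← card_erase_of_mem hu, ← card_filter_add_card_filter_not (s := U.erase u) (u < ·)]
  congr 2 <;> ext v <;> simp only [mem_filter, mem_erase] <;> grind

theorem sum_sum_filter_lt_add_add_sum {M : Type*} [AddCommMonoid M] (U : Finset ℕ) (f : ℕ → M) :
    ∑ u ∈ U, ∑ v ∈ U with u < v, (f u + f v) + ∑ u ∈ U, f u = #U • ∑ u ∈ U, f u := by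
  have hswap : ∑ u ∈ U, ∑ v ∈ U with u < v, f v = ∑ u ∈ U, ∑ v ∈ U with v < u, f u := by
    simp only [sum_filter]; exact sum_comm
  simp only [sum_add_distrib (s := filter _ _)]
  rw [sum_add_distrib, hswap, ← sum_add_distrib, ← sum_add_distrib, smul_sum]
  refine sum_congr rfl fun u hu => ?_
  rw [sum_const, sum_const, ← add_smul, ← succ_nsmul, card_filter_lt_add_card_filter_gt hu,
    Nat.sub_add_cancel (card_pos.2 ⟨u, hu⟩)]

theorem sum_card_filter_lt (U : Finset ℕ) : ∑ u ∈ U, #{v ∈ U | u < v} = (#U).choose 2 := by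
  have h := sum_sum_filter_lt_add_add_sum U (fun _ => 1)
  simp only [sum_const, smul_eq_mul, mul_one] at h
  rw [Nat.choose_two_right, ← sum_mul, Nat.mul_sub_one] at *
  omega

theorem sum_Icc_one_intCast (n : ℕ) : ∑ i ∈ Icc 1 n, (i : ℤ) = n * (n + 1) / 2 := by
  suffices h : 2 * ∑ i ∈ Icc 1 n, (i : ℤ) = n * (n + 1) by omega
  induction n with
  | zero => simp
  | succ n ih =>
    rw [sum_Icc_succ_top (by omega)]
    push_cast
    linear_combination ih

theorem pow_mul_vand_inv {q : ℝ} (hq : q ≠ 0) (U : Finset ℕ) :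
    q ^ (∑ u ∈ U, ∑ v ∈ U with u < v, (u + v)) * vand q⁻¹ U = (-1) ^ (#U).choose 2 * vand q U := by
  have hfactor : ∀ u v : ℕ, q ^ (u + v) * (q⁻¹ ^ v - q⁻¹ ^ u) = -1 * (q ^ v - q ^ u) := by
    intro u v
    rw [pow_add, inv_pow, inv_pow]
    field_simp
    ring
  unfold vand
  rw [← prod_pow_eq_pow_sum, ← prod_mul_distrib]
  simp_rw [← prod_pow_eq_pow_sum, ← prod_mul_distrib, hfactor, prod_mul_distrib, prod_const,
    prod_pow_eq_pow_sum, sum_card_filter_lt]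

theorem vand_inv {q : ℝ} (hq : q ≠ 0) (U : Finset ℕ) :
    vand q⁻¹ U = (-1) ^ (#U).choose 2 * q ^ ((1 - #U : ℤ) * ∑ u ∈ U, (u : ℤ)) * vand q U := by
  have hpairs := congrArg ((↑) : ℕ → ℤ) (sum_sum_filter_lt_add_add_sum U id)
  simp only [id_eq, smul_eq_mul] at hpairs
  set P := ∑ u ∈ U, ∑ v ∈ U with u < v, (u + v)
  push_cast at hpairs
  calc vand q⁻¹ U = (q ^ P)⁻¹ * (q ^ P * vand q⁻¹ U) :=
        (inv_mul_cancel_left₀ (pow_ne_zero _ hq) _).symm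
    _ = _ := by
        rw [pow_mul_vand_inv hq, ← zpow_natCast, ← zpow_neg,
          show -(P : ℤ) = (1 - #U) * ∑ u ∈ U, (u : ℤ) by linarith]
        ring

theorem Sq_inv {q : ℝ} (hq : q ≠ 0) (U : Finset ℕ) :
    Sq q⁻¹ U = q ^ (-((#U + 1 : ℤ) * (∑ u ∈ U, (u : ℤ) - #U * (#U + 1) / 2))) * Sq q U := by
  unfold Sq
  rw [vand_inv hq, vand_inv hq, Nat.card_Icc, add_tsub_cancel_right, sum_Icc_one_intCast, inv_zpow']
  set k : ℤ := (#U : ℤ)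
  set S := ∑ u ∈ U, (u : ℤ)
  set T := k * (k + 1) / 2
  calc _ = q ^ (-(S - T) + (1 - k) * S - (1 - k) * T) * (vand q U / vand q (Icc 1 #U)) := by
        rw [zpow_sub₀ hq, zpow_add₀ hq]
        field_simp
    _ = _ := by
        rw [show -(S - T) + (1 - k) * S - (1 - k) * T = -((k + 1) * (S - T)) + (S - T) by ring,
          zpow_add₀ hq]
        ring

theorem sum_sub_triangle_eq_mul_sub_sum_sdiff {a b : ℕ} {U : Finset ℕ}
    (hU : U ⊆ Icc 1 (a + b)) :
    ∑ u ∈ U, (u : ℤ) - a * (a + 1) / 2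
      = a * b - (∑ r ∈ Icc 1 (a + b) \ U, (r : ℤ) - b * (b + 1) / 2) := by
  have hsplit := sum_sdiff hU (f := ((↑) : ℕ → ℤ))
  rw [sum_Icc_one_intCast] at hsplit
  push_cast at hsplit
  have hbox : ((a : ℤ) + b) * (a + b + 1) = a * (a + 1) + 2 * (a * b) + b * (b + 1) := by ring
  have ha := (Int.even_mul_succ_self (a : ℤ)).two_dvd
  have hb := (Int.even_mul_succ_self (b : ℤ)).two_dvd
  omega

theorem Sq_inv_base_general (a b : ℕ)
    (q : ℝ) (hq0 : 0 < q)
    (U : Finset ℕ) (hU : U ⊆ Finset.Icc 1 (a + b)) (hcard : U.card = a) :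
    Sq q⁻¹ U
      = q ^ (-(((a : ℤ) + 1) * ((a : ℤ) * b -
          ((∑ r ∈ Finset.Icc 1 (a + b) \ U, (r : ℤ)) -
            ((b : ℤ) * (b + 1)) / 2)))) * Sq q U := by
  rw [Sq_inv hq0.ne', hcard, sum_sub_triangle_eq_mul_sub_sum_sdiff hU]

/-- Inverting the base `q ↦ q⁻¹` in `S_q` of a set `{s₁ < … < s_a} ⊆ [a+b]`
with complement `{r₁ < … < r_b}`. -/
theorem Sq_inv_base (a b : ℕ) (ha : 0 < a) (hb : 0 < b)
    (q : ℝ) (hq0 : 0 < q) (hq1 : q < 1)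
    (U : Finset ℕ) (hU : U ⊆ Finset.Icc 1 (a + b)) (hcard : U.card = a) :
    Sq q⁻¹ U
      = q ^ (-(((a : ℤ) + 1) * ((a : ℤ) * b -
          ((∑ r ∈ Finset.Icc 1 (a + b) \ U, (r : ℤ)) -
            ((b : ℤ) * (b + 1)) / 2)))) * Sq q U :=
  Sq_inv_base_general a b q hq0 U hU hcard
end
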